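/- arXiv:1901.10721 — 12 statements merged into one kernel-verified Lean document; each statement's English description precedes it below -/
import Mathlib

section
/- Let v : Fin N → ℝ be a probability mass function with all v i > 0 and N ≥ 2, not all v i equal. Define g(ϖ) = (∑ i, (v i)^2 * exp(ϖ * (1 - v i))) / (∑ i, v i * exp(ϖ * (1 - v i))). Then g is strictly decreasing in ϖ on ℝ. -/
theorem stmt_0 (N : ℕ) (hN : 2 ≤ N) (v : Fin N → ℝ)
    (hpos : ∀ i, 0 < v i) (hsum : ∑ i, v i = 1)
    (hne : ∃ i j, v i ≠ v j) :
    StrictAnti (fun ϖ : ℝ =>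
      (∑ i, (v i) ^ 2 * Real.exp (ϖ * (1 - v i))) /
      (∑ i, v i * Real.exp (ϖ * (1 - v i)))) := by
  intro a b hab
  show (∑ i, v i ^ 2 * Real.exp (b * (1 - v i))) / (∑ i, v i * Real.exp (b * (1 - v i))) <
       (∑ i, v i ^ 2 * Real.exp (a * (1 - v i))) / (∑ i, v i * Real.exp (a * (1 - v i)))
  have hNe : (Finset.univ : Finset (Fin N)).Nonempty := ⟨⟨0, by omega⟩, Finset.mem_univ _⟩
  have hB : ∀ x : ℝ, 0 < ∑ i, v i * Real.exp (x * (1 - v i)) := fun x =>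
    Finset.sum_pos (fun i _ => mul_pos (hpos i) (Real.exp_pos _)) hNe
  rw [div_lt_div_iff₀ (hB b) (hB a)]
  set t : Fin N → Fin N → ℝ := fun i j => v i ^ 2 * v j *
    (Real.exp (b * (1 - v i)) * Real.exp (a * (1 - v j)) -
     Real.exp (a * (1 - v i)) * Real.exp (b * (1 - v j))) with ht
  have expand : ∀ c d : ℝ,
      (∑ i, v i ^ 2 * Real.exp (c * (1 - v i))) * (∑ j, v j * Real.exp (d * (1 - v j))) =
      ∑ i, ∑ j, v i ^ 2 * v j * (Real.exp (c * (1 - v i)) * Real.exp (d * (1 - v j))) := by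
    intro c d
    rw [Finset.sum_mul_sum]
    exact Finset.sum_congr rfl fun i _ => Finset.sum_congr rfl fun j _ => by ring
  have hT : (∑ i, v i ^ 2 * Real.exp (b * (1 - v i))) * (∑ i, v i * Real.exp (a * (1 - v i))) -
      (∑ i, v i ^ 2 * Real.exp (a * (1 - v i))) * (∑ i, v i * Real.exp (b * (1 - v i))) =
      ∑ i, ∑ j, t i j := by
    rw [expand b a, expand a b, ← Finset.sum_sub_distrib]
    refine Finset.sum_congr rfl fun i _ => ?_
    rw [← Finset.sum_sub_distrib]
    exact Finset.sum_congr rfl fun j _ => by rw [ht]; ring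
  have hswap : (∑ i, ∑ j, t i j) = ∑ i, ∑ j, t j i := Finset.sum_comm
  -- sign of the symmetrized term
  have hD : ∀ i j : Fin N, v i < v j →
      0 < Real.exp (b * (1 - v i)) * Real.exp (a * (1 - v j)) -
          Real.exp (a * (1 - v i)) * Real.exp (b * (1 - v j)) := by
    intro i j hij
    rw [← Real.exp_add, ← Real.exp_add, sub_pos]
    apply Real.exp_lt_exp.2
    nlinarith [mul_pos (sub_pos.2 hab) (sub_pos.2 hij)]
  have hfact : ∀ i j : Fin N, t i j + t j i = v i * v j * ((v i - v j) *
      (Real.exp (b * (1 - v i)) * Real.exp (a * (1 - v j)) -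
       Real.exp (a * (1 - v i)) * Real.exp (b * (1 - v j)))) := by
    intro i j; rw [ht]; ring
  have fle : ∀ i j : Fin N, t i j + t j i ≤ 0 := by
    intro i j
    rw [hfact i j]
    rcases lt_trichotomy (v i) (v j) with h | h | h
    · exact le_of_lt (mul_neg_of_pos_of_neg (mul_pos (hpos i) (hpos j))
        (mul_neg_of_neg_of_pos (sub_neg.2 h) (hD i j h)))
    · simp [h]
    · have hD' := hD j i h
      have : (v i - v j) *
          (Real.exp (b * (1 - v i)) * Real.exp (a * (1 - v j)) -
           Real.exp (a * (1 - v i)) * Real.exp (b * (1 - v j))) < 0 := by nlinarith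
      exact le_of_lt (mul_neg_of_pos_of_neg (mul_pos (hpos i) (hpos j)) this)
  have flt : ∀ i j : Fin N, v i ≠ v j → t i j + t j i < 0 := by
    intro i j hij
    rw [hfact i j]
    rcases lt_or_gt_of_ne hij with h | h
    · exact mul_neg_of_pos_of_neg (mul_pos (hpos i) (hpos j))
        (mul_neg_of_neg_of_pos (sub_neg.2 h) (hD i j h))
    · have hD' := hD j i h
      have : (v i - v j) *
          (Real.exp (b * (1 - v i)) * Real.exp (a * (1 - v j)) -
           Real.exp (a * (1 - v i)) * Real.exp (b * (1 - v j))) < 0 := by nlinarith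
      exact mul_neg_of_pos_of_neg (mul_pos (hpos i) (hpos j)) this
  obtain ⟨i0, j0, hij0⟩ := hne
  have hdouble : (∑ i, ∑ j, (t i j + t j i)) < 0 := by
    have := Finset.sum_lt_sum (s := Finset.univ) (f := fun i => ∑ j, (t i j + t j i))
      (g := fun _ => (0 : ℝ))
      (fun i _ => Finset.sum_nonpos fun j _ => fle i j)
      ⟨i0, Finset.mem_univ _, by
        calc ∑ j, (t i0 j + t j i0) < ∑ _j : Fin N, (0 : ℝ) :=
              Finset.sum_lt_sum (fun j _ => fle i0 j) ⟨j0, Finset.mem_univ _, flt i0 j0 hij0⟩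
          _ = 0 := by simp⟩
    simpa using this
  have hsum2 : (∑ i, ∑ j, (t i j + t j i)) = (∑ i, ∑ j, t i j) + (∑ i, ∑ j, t j i) := by
    rw [← Finset.sum_add_distrib]
    exact Finset.sum_congr rfl fun i _ => Finset.sum_add_distrib
  rw [hsum2, ← hswap] at hdouble
  linarith [hT, hdouble]
end

section
/- Let v : Fin N → ℝ be a probability mass function with all v i > 0 and a unique index m achieving the minimum value v_min (i.e., v m < v i for all i ≠ m). Define g(ϖ) = (∑ i, (v i)^2 * exp(ϖ*(1 - v i))) / (∑ i, v i * exp(ϖ*(1 - v i))). Then g(ϖ) → v m as ϖ → +∞. -/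
/-!
After dividing numerator and denominator by `exp (ϖ * (1 - v m))`, every term with `i ≠ m`
carries a factor `exp (ϖ * (v m - v i)) → 0`, so the ratio tends to `v m ^ 2 / v m = v m`.
-/

open Filter Real Topology

section ExponentialWeights

variable {ι : Type*} [Fintype ι] (w : ι → ℝ) {m : ι}

theorem tendsto_sum_mul_exp_sub_of_forall_lt (c : ι → ℝ) (hw : ∀ i, i ≠ m → w i < w m) :
    Tendsto (fun t : ℝ => ∑ i, c i * exp (t * (w i - w m))) atTop (𝓝 (c m)) := by
  classical
  have hterm : ∀ i, Tendsto (fun t : ℝ => c i * exp (t * (w i - w m))) atTop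
      (𝓝 (if i = m then c m else 0)) := by
    intro i
    by_cases hi : i = m
    · subst hi
      simp
    · have hexp : Tendsto (fun t : ℝ => exp (t * (w i - w m))) atTop (𝓝 0) :=
        tendsto_exp_atBot.comp <| tendsto_id.atTop_mul_const_of_neg (sub_neg.2 (hw i hi))
      simpa [hi] using hexp.const_mul (c i)
  simpa using tendsto_finsetSum Finset.univ fun i _ => hterm i

theorem tendsto_sum_mul_exp_div_sum_mul_exp (a b : ι → ℝ) (hw : ∀ i, i ≠ m → w i < w m)
    (hb : b m ≠ 0) :
    Tendsto (fun t : ℝ => (∑ i, a i * exp (t * w i)) / ∑ i, b i * exp (t * w i)) atTop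
      (𝓝 (a m / b m)) := by
  have hrescale : ∀ (c : ι → ℝ) (t : ℝ), ∑ i, c i * exp (t * w i) =
      (∑ i, c i * exp (t * (w i - w m))) * exp (t * w m) := by
    intro c t
    rw [Finset.sum_mul]
    refine Finset.sum_congr rfl fun i _ => ?_
    rw [mul_assoc, ← exp_add]
    ring_nf
  refine ((tendsto_sum_mul_exp_sub_of_forall_lt w a hw).div
    (tendsto_sum_mul_exp_sub_of_forall_lt w b hw) hb).congr fun t => ?_
  rw [Pi.div_apply, hrescale a, hrescale b, mul_div_mul_right _ _ (exp_ne_zero _)]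

end ExponentialWeights

theorem stmt_2_general (N : ℕ) (v : Fin N → ℝ)
    (hpos : ∀ i, 0 < v i)
    (m : Fin N) (hmin : ∀ i, i ≠ m → v m < v i) :
    Filter.Tendsto (fun ϖ : ℝ =>
      (∑ i, (v i) ^ 2 * Real.exp (ϖ * (1 - v i))) /
      (∑ i, v i * Real.exp (ϖ * (1 - v i))))
      Filter.atTop (nhds (v m)) := by
  have hw : ∀ i, i ≠ m → 1 - v i < 1 - v m := fun i hi => by linarith [hmin i hi]
  have hlim := tendsto_sum_mul_exp_div_sum_mul_exp (fun i => 1 - v i) (fun i => v i ^ 2) v hw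
    (hpos m).ne'
  rwa [sq, mul_div_cancel_right₀ _ (hpos m).ne'] at hlim

theorem stmt_2 (N : ℕ) (v : Fin N → ℝ)
    (hpos : ∀ i, 0 < v i) (hsum : ∑ i, v i = 1)
    (m : Fin N) (hmin : ∀ i, i ≠ m → v m < v i) :
    Filter.Tendsto (fun ϖ : ℝ =>
      (∑ i, (v i) ^ 2 * Real.exp (ϖ * (1 - v i))) /
      (∑ i, v i * Real.exp (ϖ * (1 - v i))))
      Filter.atTop (nhds (v m)) :=
  stmt_2_general N v hpos m hmin
end

section
/- Let v : Fin N → ℝ be a probability mass function with all v i > 0 and a unique index M achieving the maximum value (i.e., v M > v i for all i ≠ M). Define g(ϖ) = (∑ i, (v i)^2 * exp(ϖ*(1 - v i))) / (∑ i, v i * exp(ϖ*(1 - v i))). Then g(ϖ) → v M as ϖ → -∞. -/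
theorem stmt_3 (N : ℕ) (v : Fin N → ℝ)
    (hpos : ∀ i, 0 < v i) (hsum : ∑ i, v i = 1)
    (M : Fin N) (hmax : ∀ i, i ≠ M → v i < v M) :
    Filter.Tendsto (fun ϖ : ℝ =>
      (∑ i, (v i) ^ 2 * Real.exp (ϖ * (1 - v i))) /
      (∑ i, v i * Real.exp (ϖ * (1 - v i))))
      Filter.atBot (nhds (v M)) := by
  have hM : 0 < v M := hpos M
  -- term limits
  have hterm : ∀ (c : ℝ) (i : Fin N),
      Filter.Tendsto (fun ϖ : ℝ => c * Real.exp (ϖ * (v M - v i)))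
        Filter.atBot (nhds (if i = M then c else 0)) := by
    intro c i
    by_cases h : i = M
    · subst h
      simp only [sub_self, mul_zero, Real.exp_zero, mul_one, if_pos rfl]
      exact tendsto_const_nhds
    · rw [if_neg h]
      have hd : 0 < v M - v i := sub_pos.mpr (hmax i h)
      have h1 : Filter.Tendsto (fun ϖ : ℝ => ϖ * (v M - v i))
          Filter.atBot Filter.atBot :=
        Filter.Tendsto.atBot_mul_const hd Filter.tendsto_id
      have h2 := Real.tendsto_exp_atBot.comp h1
      have := h2.const_mul c
      simpa using this
  have hA : Filter.Tendsto (fun ϖ : ℝ => ∑ i, (v i) ^ 2 * Real.exp (ϖ * (v M - v i)))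
      Filter.atBot (nhds ((v M) ^ 2)) := by
    have hs : (∑ i, if i = M then (v i) ^ 2 else 0) = (v M) ^ 2 := by
      rw [Finset.sum_ite_eq' Finset.univ M (fun i => (v i) ^ 2)]
      simp
    rw [← hs]
    exact tendsto_finset_sum _ (fun i _ => by
      have := hterm ((v i) ^ 2) i
      by_cases h : i = M <;> simp [h] at this ⊢ <;> exact this)
  have hB : Filter.Tendsto (fun ϖ : ℝ => ∑ i, v i * Real.exp (ϖ * (v M - v i)))
      Filter.atBot (nhds (v M)) := by
    have hs : (∑ i, if i = M then v i else 0) = v M := by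
      rw [Finset.sum_ite_eq' Finset.univ M (fun i => v i)]
      simp
    rw [← hs]
    exact tendsto_finset_sum _ (fun i _ => by
      have := hterm (v i) i
      by_cases h : i = M <;> simp [h] at this ⊢ <;> exact this)
  have key : (fun ϖ : ℝ =>
      (∑ i, (v i) ^ 2 * Real.exp (ϖ * (1 - v i))) /
      (∑ i, v i * Real.exp (ϖ * (1 - v i)))) =
      fun ϖ : ℝ =>
      (∑ i, (v i) ^ 2 * Real.exp (ϖ * (v M - v i))) /
      (∑ i, v i * Real.exp (ϖ * (v M - v i))) := by
    funext ϖ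
    have hsplit : ∀ i : Fin N, ϖ * (1 - v i) = ϖ * (v M - v i) + ϖ * (1 - v M) := by
      intro i; ring
    have e1 : (∑ i, (v i) ^ 2 * Real.exp (ϖ * (1 - v i))) =
        (∑ i, (v i) ^ 2 * Real.exp (ϖ * (v M - v i))) * Real.exp (ϖ * (1 - v M)) := by
      rw [Finset.sum_mul]
      exact Finset.sum_congr rfl (fun i _ => by
        rw [hsplit i, Real.exp_add, mul_assoc])
    have e2 : (∑ i, v i * Real.exp (ϖ * (1 - v i))) =
        (∑ i, v i * Real.exp (ϖ * (v M - v i))) * Real.exp (ϖ * (1 - v M)) := by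
      rw [Finset.sum_mul]
      exact Finset.sum_congr rfl (fun i _ => by
        rw [hsplit i, Real.exp_add, mul_assoc])
    rw [e1, e2, mul_div_mul_right _ _ (Real.exp_ne_zero _)]
  rw [key]
  have := hA.div hB (ne_of_gt hM)
  have heq : (v M) ^ 2 / v M = v M := by
    rw [sq, mul_div_assoc, div_self (ne_of_gt hM), mul_one]
  rwa [heq] at this
end

section
/- Let u : Fin N → ℝ be a probability mass function with positive entries. Define f(ϖ, x) = u x * exp(ϖ*(1 - u x)) / (∑ i, u i * exp(ϖ*(1 - u i))) and g(ϖ) = (∑ i, (u i)^2 * exp(ϖ*(1 - u i))) / (∑ i, u i * exp(ϖ*(1 - u i))). Then the partial derivative of f(·, x) at ϖ has the same sign as g(ϖ) - u x; in particular, if g(ϖ) > u x then ∂f/∂ϖ(ϖ, x) > 0, and if g(ϖ) < u x then ∂f/∂ϖ(ϖ, x) < 0. -/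
/-! The derivative of a softmax weight `a x * exp (w * b x) / ∑ i, a i * exp (w * b i)` is the
weight times `b x` minus the mean of `b` under these weights. For `a = u`, `b i = 1 - u i` that
mean is `1 - g(ϖ)`, so `∂f/∂ϖ = f * (g(ϖ) - u x)` with `f > 0`. -/

open Real

section Softmax

variable {ι : Type*} [Fintype ι] (a b : ι → ℝ)

theorem sum_mul_exp_pos [Nonempty ι] (ha : ∀ i, 0 < a i) (w : ℝ) :
    0 < ∑ i, a i * exp (w * b i) :=
  Finset.sum_pos (fun i _ => mul_pos (ha i) (exp_pos _)) Finset.univ_nonempty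

theorem hasDerivAt_sum_mul_exp (w : ℝ) :
    HasDerivAt (fun w => ∑ i, a i * exp (w * b i)) (∑ i, a i * b i * exp (w * b i)) w := by
  refine HasDerivAt.fun_sum fun i _ => ?_
  have h := (((hasDerivAt_id w).mul_const (b i)).exp).const_mul (a i)
  simpa [mul_comm, mul_left_comm, mul_assoc] using h

theorem hasDerivAt_mul_exp_div_sum (x : ι) (w : ℝ) (hZ : ∑ i, a i * exp (w * b i) ≠ 0) :
    HasDerivAt (fun w => a x * exp (w * b x) / ∑ i, a i * exp (w * b i))
      (a x * exp (w * b x) / (∑ i, a i * exp (w * b i)) *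
        (b x - (∑ i, a i * b i * exp (w * b i)) / ∑ i, a i * exp (w * b i))) w := by
  have hnum : HasDerivAt (fun w => a x * exp (w * b x)) (a x * (b x * exp (w * b x))) w := by
    simpa [mul_comm] using (((hasDerivAt_id w).mul_const (b x)).exp).const_mul (a x)
  refine (hnum.div (hasDerivAt_sum_mul_exp a b w) hZ).congr_deriv ?_
  field_simp

end Softmax

theorem hasDerivAt_tilted_weight {ι : Type*} [Fintype ι] (u : ι → ℝ) (x : ι) (ϖ : ℝ)
    (hS : ∑ i, u i * exp (ϖ * (1 - u i)) ≠ 0) :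
    HasDerivAt (fun w => u x * exp (w * (1 - u x)) / ∑ i, u i * exp (w * (1 - u i)))
      (u x * exp (ϖ * (1 - u x)) / (∑ i, u i * exp (ϖ * (1 - u i))) *
        ((∑ i, u i ^ 2 * exp (ϖ * (1 - u i))) / (∑ i, u i * exp (ϖ * (1 - u i))) - u x)) ϖ := by
  convert hasDerivAt_mul_exp_div_sum u (fun i => 1 - u i) x ϖ hS using 2
  have hsplit : ∑ i, u i * (1 - u i) * exp (ϖ * (1 - u i)) =
      ∑ i, u i * exp (ϖ * (1 - u i)) - ∑ i, u i ^ 2 * exp (ϖ * (1 - u i)) := by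
    rw [← Finset.sum_sub_distrib]
    exact Finset.sum_congr rfl fun i _ => by ring
  rw [hsplit]
  field_simp
  ring

theorem stmt_7_general (N : ℕ) (u : Fin N → ℝ)
    (hpos : ∀ i, 0 < u i)
    (x : Fin N) (ϖ : ℝ) :
    (u x < (∑ i, (u i) ^ 2 * Real.exp (ϖ * (1 - u i))) /
        (∑ i, u i * Real.exp (ϖ * (1 - u i))) →
      0 < deriv (fun w : ℝ => u x * Real.exp (w * (1 - u x)) /
        (∑ i, u i * Real.exp (w * (1 - u i)))) ϖ) ∧
    ((∑ i, (u i) ^ 2 * Real.exp (ϖ * (1 - u i))) /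
        (∑ i, u i * Real.exp (ϖ * (1 - u i))) < u x →
      deriv (fun w : ℝ => u x * Real.exp (w * (1 - u x)) /
        (∑ i, u i * Real.exp (w * (1 - u i)))) ϖ < 0) := by
  have : Nonempty (Fin N) := ⟨x⟩
  have hS := sum_mul_exp_pos u (fun i => 1 - u i) hpos ϖ
  have hf : 0 < u x * exp (ϖ * (1 - u x)) / ∑ i, u i * exp (ϖ * (1 - u i)) :=
    div_pos (mul_pos (hpos x) (exp_pos _)) hS
  rw [(hasDerivAt_tilted_weight u x ϖ hS.ne').deriv]
  exact ⟨fun h => mul_pos hf (sub_pos.mpr h), fun h => mul_neg_of_pos_of_neg hf (sub_neg.mpr h)⟩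

theorem stmt_7 (N : ℕ) (hN : 2 ≤ N) (u : Fin N → ℝ)
    (hpos : ∀ i, 0 < u i) (hsum : ∑ i, u i = 1)
    (x : Fin N) (ϖ : ℝ) :
    (u x < (∑ i, (u i) ^ 2 * Real.exp (ϖ * (1 - u i))) /
        (∑ i, u i * Real.exp (ϖ * (1 - u i))) →
      0 < deriv (fun w : ℝ => u x * Real.exp (w * (1 - u x)) /
        (∑ i, u i * Real.exp (w * (1 - u i)))) ϖ) ∧
    ((∑ i, (u i) ^ 2 * Real.exp (ϖ * (1 - u i))) /
        (∑ i, u i * Real.exp (ϖ * (1 - u i))) < u x →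
      deriv (fun w : ℝ => u x * Real.exp (w * (1 - u x)) /
        (∑ i, u i * Real.exp (w * (1 - u i)))) ϖ < 0) :=
  stmt_7_general N u hpos x ϖ
end

section
/- Let u : Fin N → ℝ be a probability mass function with positive entries, and let x be an index achieving the strict unique maximum of u (u x > u i for all i ≠ x). Define f(ϖ) = u x * exp(ϖ*(1 - u x)) / (∑ i, u i * exp(ϖ*(1 - u i))). Then f is strictly decreasing on ℝ. -/
theorem stmt_8 (N : ℕ) (hN : 2 ≤ N) (u : Fin N → ℝ)
    (hpos : ∀ i, 0 < u i) (hsum : ∑ i, u i = 1)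
    (x : Fin N) (hmax : ∀ i, i ≠ x → u i < u x) :
    StrictAnti (fun ϖ : ℝ => u x * Real.exp (ϖ * (1 - u x)) /
      (∑ i, u i * Real.exp (ϖ * (1 - u i)))) := by
  have hD : ∀ ϖ : ℝ, 0 < ∑ i, u i * Real.exp (ϖ * (1 - u i)) := by
    intro ϖ
    apply Finset.sum_pos
    · intro i _
      exact mul_pos (hpos i) (Real.exp_pos _)
    · exact ⟨x, Finset.mem_univ x⟩
  intro a b hab
  simp only
  rw [div_lt_div_iff₀ (hD b) (hD a), Finset.mul_sum, Finset.mul_sum]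
  haveI : Nontrivial (Fin N) := Fin.nontrivial_iff_two_le.mpr hN
  obtain ⟨j, hj⟩ := exists_ne x
  apply Finset.sum_lt_sum
  · intro i _
    rcases eq_or_ne i x with rfl | hix
    · exact le_of_eq (by ring)
    · apply le_of_lt
      have h1 : Real.exp (b * (1 - u x)) * Real.exp (a * (1 - u i)) <
          Real.exp (a * (1 - u x)) * Real.exp (b * (1 - u i)) := by
        rw [← Real.exp_add, ← Real.exp_add, Real.exp_lt_exp]
        nlinarith [hmax i hix]
      nlinarith [mul_lt_mul_of_pos_left h1 (mul_pos (hpos x) (hpos i))]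
  · refine ⟨j, Finset.mem_univ j, ?_⟩
    have h1 : Real.exp (b * (1 - u x)) * Real.exp (a * (1 - u j)) <
        Real.exp (a * (1 - u x)) * Real.exp (b * (1 - u j)) := by
      rw [← Real.exp_add, ← Real.exp_add, Real.exp_lt_exp]
      nlinarith [hmax j hj]
    nlinarith [mul_lt_mul_of_pos_left h1 (mul_pos (hpos x) (hpos j))]
end

section
/- Let u : Fin N → ℝ be a probability mass function with positive entries, and let x be an index achieving the strict unique minimum of u (u x < u i for all i ≠ x). Define f(ϖ) = u x * exp(ϖ*(1 - u x)) / (∑ i, u i * exp(ϖ*(1 - u i))). Then f is strictly increasing on ℝ. -/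
theorem stmt_9 (N : ℕ) (hN : 2 ≤ N) (u : Fin N → ℝ)
    (hpos : ∀ i, 0 < u i) (hsum : ∑ i, u i = 1)
    (x : Fin N) (hmin : ∀ i, i ≠ x → u x < u i) :
    StrictMono (fun ϖ : ℝ => u x * Real.exp (ϖ * (1 - u x)) /
      (∑ i, u i * Real.exp (ϖ * (1 - u i)))) := by
  intro a b hab
  have hS : ∀ ϖ : ℝ, 0 < ∑ i, u i * Real.exp (ϖ * (1 - u i)) :=
    fun ϖ => Finset.sum_pos (fun i _ => mul_pos (hpos i) (Real.exp_pos _))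
      ⟨x, Finset.mem_univ x⟩
  simp only
  rw [div_lt_div_iff₀ (hS a) (hS b), Finset.mul_sum, Finset.mul_sum]
  have key : ∀ (s t : ℝ) (i : Fin N),
      u x * Real.exp (s * (1 - u x)) * (u i * Real.exp (t * (1 - u i)))
        = u x * u i * Real.exp (s * (1 - u x) + t * (1 - u i)) := by
    intro s t i; rw [Real.exp_add]; ring
  have hne : ∃ y : Fin N, y ≠ x := by
    have : Nontrivial (Fin N) := Fin.nontrivial_iff_two_le.mpr hN
    exact exists_ne x
  apply Finset.sum_lt_sum
  · intro i _
    rw [key, key]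
    rcases eq_or_ne i x with rfl | h
    · apply le_of_eq; ring_nf
    · apply mul_le_mul_of_nonneg_left _ (le_of_lt (mul_pos (hpos x) (hpos i)))
      apply Real.exp_le_exp.mpr
      have := hmin i h
      nlinarith
  · obtain ⟨y, hy⟩ := hne
    refine ⟨y, Finset.mem_univ y, ?_⟩
    rw [key, key]
    apply mul_lt_mul_of_pos_left _ (mul_pos (hpos x) (hpos y))
    apply Real.exp_lt_exp.mpr
    have := hmin y hy
    nlinarith
end

section
/- Let u : Fin N → ℝ be a probability mass function with positive entries and a unique maximizing index M (u M > u i for all i ≠ M). Define f(ϖ, x) = u x * exp(ϖ*(1 - u x)) / (∑ i, u i * exp(ϖ*(1 - u i))). Then f(ϖ, M) → 1 as ϖ → -∞, and f(ϖ, x) → 0 as ϖ → -∞ for every x ≠ M. -/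
/-! Dividing numerator and denominator by the dominant term `w M * exp (t * c M)` turns every
summand into `w i / w M * exp (t * (c i - c M))`, which is identically `1` for `i = M` and tends
to `0` as `t → -∞` otherwise, since then `c i - c M > 0`. -/

open Filter Real Topology

section SoftminLimit

variable {ι : Type*} (w c : ι → ℝ) (M : ι)

theorem tendsto_div_mul_exp_sub_atBot [DecidableEq ι] (hw : w M ≠ 0)
    (hc : ∀ i, i ≠ M → c M < c i) (i : ι) :
    Tendsto (fun t => w i / w M * exp (t * (c i - c M))) atBot
      (𝓝 (if i = M then 1 else 0)) := by
  by_cases hi : i = M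
  · subst hi
    simp [hw]
  · have hexp : Tendsto (fun t => exp (t * (c i - c M))) atBot (𝓝 0) :=
      tendsto_exp_atBot.comp (tendsto_id.atBot_mul_const (sub_pos.mpr (hc i hi)))
    simpa [hi] using hexp.const_mul (w i / w M)

theorem mul_exp_div_sum_eq_normalized [Fintype ι] (hw : w M ≠ 0) (t : ℝ) (x : ι) :
    w x * exp (t * c x) / ∑ i, w i * exp (t * c i) =
      w x / w M * exp (t * (c x - c M)) / ∑ i, w i / w M * exp (t * (c i - c M)) := by
  have hterm : ∀ i, w i / w M * exp (t * (c i - c M)) =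
      w i * exp (t * c i) / (w M * exp (t * c M)) := by
    intro i
    rw [mul_sub, exp_sub]
    field_simp
  simp only [hterm, ← Finset.sum_div]
  exact (div_div_div_cancel_right₀ (mul_ne_zero hw (exp_pos _).ne') _ _).symm

theorem tendsto_mul_exp_div_sum_atBot [Fintype ι] [DecidableEq ι] (hw : w M ≠ 0)
    (hc : ∀ i, i ≠ M → c M < c i) (x : ι) :
    Tendsto (fun t => w x * exp (t * c x) / ∑ i, w i * exp (t * c i)) atBot
      (𝓝 (if x = M then 1 else 0)) := by
  simp_rw [mul_exp_div_sum_eq_normalized w c M hw]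
  have hsum : Tendsto (fun t => ∑ i, w i / w M * exp (t * (c i - c M))) atBot (𝓝 1) := by
    simpa using tendsto_finsetSum Finset.univ
      fun i _ => tendsto_div_mul_exp_sub_atBot w c M hw hc i
  rw [← div_one (if x = M then (1 : ℝ) else 0)]
  exact (tendsto_div_mul_exp_sub_atBot w c M hw hc x).div hsum one_ne_zero

end SoftminLimit

theorem stmt_11_general (N : ℕ) (u : Fin N → ℝ)
    (hpos : ∀ i, 0 < u i)
    (M : Fin N) (hmax : ∀ i, i ≠ M → u i < u M) :
    Filter.Tendsto (fun ϖ : ℝ => u M * Real.exp (ϖ * (1 - u M)) /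
      (∑ i, u i * Real.exp (ϖ * (1 - u i)))) Filter.atBot (nhds 1) ∧
    ∀ x, x ≠ M → Filter.Tendsto (fun ϖ : ℝ => u x * Real.exp (ϖ * (1 - u x)) /
      (∑ i, u i * Real.exp (ϖ * (1 - u i)))) Filter.atBot (nhds 0) := by
  have h := tendsto_mul_exp_div_sum_atBot u (fun i => 1 - u i) M (hpos M).ne'
    fun i hi => sub_lt_sub_left (hmax i hi) 1
  exact ⟨by simpa using h M, fun x hx => by simpa [hx] using h x⟩

theorem stmt_11 (N : ℕ) (hN : 2 ≤ N) (u : Fin N → ℝ)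
    (hpos : ∀ i, 0 < u i) (hsum : ∑ i, u i = 1)
    (M : Fin N) (hmax : ∀ i, i ≠ M → u i < u M) :
    Filter.Tendsto (fun ϖ : ℝ => u M * Real.exp (ϖ * (1 - u M)) /
      (∑ i, u i * Real.exp (ϖ * (1 - u i)))) Filter.atBot (nhds 1) ∧
    ∀ x, x ≠ M → Filter.Tendsto (fun ϖ : ℝ => u x * Real.exp (ϖ * (1 - u x)) /
      (∑ i, u i * Real.exp (ϖ * (1 - u i)))) Filter.atBot (nhds 0) :=
  stmt_11_general N u hpos M hmax
end

section
/- Let u : Fin N → ℝ be a probability mass function with positive entries, not all equal, and suppose α satisfies 1 - ∑ i (u i)^2 < α < 1 - u_min, where u_min is the minimum of u. Then there exists a unique ϖ* > 0 such that (∑ i, (u i)^2 * exp(ϖ* * (1 - u i))) / (∑ i, u i * exp(ϖ* * (1 - u i))) = 1 - α, provided u has a unique minimizing index. -/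
/-!
After cancelling the common factor `exp ϖ`, the ratio is `g ϖ = ∑ uᵢ·uᵢ e^{-ϖuᵢ} / ∑ uᵢ e^{-ϖuᵢ}`,
the mean of `u` under the Gibbs weights `uᵢ e^{-ϖuᵢ}`. Then `g 0 = ∑ uᵢ²`, and `g ϖ → u_min` as
`ϖ → ∞` because the weights concentrate on the minimisers. Moving from `ϖ` to `ϖ + r` multiplies
the weights by `e^{-r uᵢ}`, which is anticorrelated with `uᵢ`, so by the strict weighted Chebyshev
inequality `g` is strictly decreasing. The intermediate value theorem gives a solution and strict
monotonicity makes it unique.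
-/

open Finset Real Filter Topology

variable {ι : Type*} [Fintype ι]

lemma two_mul_sum_mul_sum_sub_eq_sum_sum (a f g : ι → ℝ) :
    2 * ((∑ i, a i * f i) * (∑ i, a i * g i) - (∑ i, a i) * ∑ i, a i * f i * g i) =
      -∑ i, ∑ j, a i * a j * (f i - f j) * (g i - g j) := by
  set D : ι → ι → ℝ := fun i j => a i * f i * (a j * g j) - a i * (a j * f j * g j)
  have hsplit : ∑ i, ∑ j, a i * a j * (f i - f j) * (g i - g j) = -∑ i, ∑ j, (D i j + D j i) :=
    by simp only [D, ← sum_neg_distrib]; congr! 2; ring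
  rw [hsplit, neg_neg, sum_mul_sum, sum_mul_sum, ← sum_sub_distrib]
  simp only [sum_add_distrib, ← sum_sub_distrib]
  rw [sum_comm (f := fun i j => D j i)]
  ring

lemma weighted_chebyshev_lt {a f g : ι → ℝ} (ha : ∀ i, 0 < a i)
    (hfg : ∀ i j, (f i - f j) * (g i - g j) ≤ 0) (hfg' : ∃ i j, (f i - f j) * (g i - g j) < 0) :
    (∑ i, a i) * ∑ i, a i * f i * g i < (∑ i, a i * f i) * ∑ i, a i * g i := by
  obtain ⟨i₀, j₀, hij⟩ := hfg'
  have hterm : ∀ i j, 0 ≤ -(a i * a j * (f i - f j) * (g i - g j)) := fun i j => by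
    have := mul_nonpos_of_nonneg_of_nonpos (mul_pos (ha i) (ha j)).le (hfg i j)
    linarith [mul_assoc (a i * a j) (f i - f j) (g i - g j)]
  have hpos : 0 < ∑ i, ∑ j, -(a i * a j * (f i - f j) * (g i - g j)) :=
    sum_pos' (fun i _ => sum_nonneg fun j _ => hterm i j)
      ⟨i₀, mem_univ _, sum_pos' (fun j _ => hterm i₀ j) ⟨j₀, mem_univ _, by
        have := mul_neg_of_pos_of_neg (mul_pos (ha i₀) (ha j₀)) hij
        linarith [mul_assoc (a i₀ * a j₀) (f i₀ - f j₀) (g i₀ - g j₀)]⟩⟩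
  have := two_mul_sum_mul_sum_sub_eq_sum_sum a f g
  simp only [sum_neg_distrib] at hpos this
  linarith

noncomputable def gibbsMean (w x : ι → ℝ) (t : ℝ) : ℝ :=
  (∑ i, w i * x i * exp (-(t * x i))) / ∑ i, w i * exp (-(t * x i))

lemma gibbsMean_zero (w x : ι → ℝ) : gibbsMean w x 0 = (∑ i, w i * x i) / ∑ i, w i := by
  simp [gibbsMean]

lemma gibbsMean_add (w x : ι → ℝ) (s r : ℝ) :
    gibbsMean w x (s + r) = gibbsMean (fun i => w i * exp (-(s * x i))) x r := by
  have h : ∀ i, exp (-((s + r) * x i)) = exp (-(s * x i)) * exp (-(r * x i)) := fun i => by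
    rw [← exp_add]; ring_nf
  simp only [gibbsMean, h]
  congr 1 <;> exact sum_congr rfl fun i _ => by ring

section GibbsMean

variable {w x : ι → ℝ}

lemma gibbsMean_lt_gibbsMean_zero (hw : ∀ i, 0 < w i) (hx : ∃ i j, x i ≠ x j) {r : ℝ}
    (hr : 0 < r) :
    gibbsMean w x r < gibbsMean w x 0 := by
  have hanti : StrictAnti fun y => exp (-(r * y)) :=
    fun a b hab => exp_lt_exp.2 (by nlinarith)
  have hcorr : ∀ i j, x i ≠ x j → (x i - x j) * (exp (-(r * x i)) - exp (-(r * x j))) < 0 := by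
    intro i j hij
    rcases hij.lt_or_gt with h | h
    · exact mul_neg_of_neg_of_pos (by linarith) (by linarith [hanti h])
    · exact mul_neg_of_pos_of_neg (by linarith) (by linarith [hanti h])
  have hcheb := weighted_chebyshev_lt (g := fun i => exp (-(r * x i))) hw
    (fun i j => by
      rcases eq_or_ne (x i) (x j) with h | h
      · simp [h]
      · exact (hcorr i j h).le)
    (by obtain ⟨i, j, h⟩ := hx; exact ⟨i, j, hcorr i j h⟩)
  obtain ⟨i₀, -⟩ := hx
  have hpos : ∀ s, 0 < ∑ i, w i * exp (-(s * x i)) := fun s =>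
    sum_pos (fun i _ => mul_pos (hw i) (exp_pos _)) ⟨i₀, mem_univ _⟩
  rw [gibbsMean_zero, gibbsMean, div_lt_div_iff₀ (hpos r) (by simpa using hpos 0)]
  linarith

lemma strictAnti_gibbsMean (hw : ∀ i, 0 < w i) (hx : ∃ i j, x i ≠ x j) :
    StrictAnti (gibbsMean w x) := by
  intro s t hst
  rw [← add_zero s, ← add_sub_cancel s t, gibbsMean_add, gibbsMean_add]
  exact gibbsMean_lt_gibbsMean_zero (fun i => mul_pos (hw i) (exp_pos _)) hx (sub_pos.2 hst)

lemma continuous_gibbsMean [Nonempty ι] (hw : ∀ i, 0 < w i) : Continuous (gibbsMean w x) := by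
  refine .div (by fun_prop) (by fun_prop) fun t => (sum_pos (fun i _ => ?_) univ_nonempty).ne'
  exact mul_pos (hw i) (exp_pos _)

lemma tendsto_gibbsMean_atTop (hw : ∀ i, 0 < w i) {m : ι} (hm : ∀ i, x m ≤ x i) :
    Tendsto (gibbsMean w x) atTop (𝓝 (x m)) := by
  set E : ι → ℝ → ℝ := fun i t => exp (-(t * (x i - x m)))
  set L : ι → ℝ := fun i => if x i = x m then 1 else 0
  have hE : ∀ i, Tendsto (E i) atTop (𝓝 (L i)) := by
    intro i
    by_cases h : x i = x m
    · simp [E, L, h]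
    · rw [show L i = 0 from if_neg h]
      exact tendsto_exp_neg_atTop_nhds_zero.comp
        (tendsto_id.atTop_mul_const (sub_pos.2 ((hm i).lt_of_ne' h)))
  have hxL : ∀ i, w i * x i * L i = x m * (w i * L i) := fun i => by
    by_cases h : x i = x m <;> simp [L, h]; ring
  have hD : 0 < ∑ i, w i * L i :=
    sum_pos' (fun i _ => mul_nonneg (hw i).le (by positivity)) ⟨m, mem_univ _, by simp [L, hw m]⟩
  have hlim : Tendsto (fun t => (∑ i, w i * x i * E i t) / ∑ i, w i * E i t) atTop
      (𝓝 ((∑ i, w i * x i * L i) / ∑ i, w i * L i)) :=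
    (tendsto_finsetSum _ fun i _ => (hE i).const_mul _).div
      (tendsto_finsetSum _ fun i _ => (hE i).const_mul _) hD.ne'
  simp only [hxL, ← mul_sum, mul_div_assoc, div_self hD.ne', mul_one] at hlim
  refine hlim.congr fun t => ?_
  have h : ∀ i, exp (-(t * x i)) = exp (-(t * x m)) * E i t := fun i => by
    rw [← exp_add]; ring_nf
  have hsum : ∀ v : ι → ℝ, ∑ i, v i * exp (-(t * x i)) = exp (-(t * x m)) * ∑ i, v i * E i t :=
    fun v => by rw [mul_sum]; exact sum_congr rfl fun i _ => by rw [h i]; ring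
  rw [gibbsMean, hsum, hsum (w ·), mul_div_mul_left _ _ (exp_ne_zero _)]

end GibbsMean

lemma StrictAnti.existsUnique_pos_eq {f : ℝ → ℝ} (hf : StrictAnti f) (hfc : Continuous f)
    {L c : ℝ} (hL : Tendsto f atTop (𝓝 L)) (hLc : L < c) (hc : c < f 0) :
    ∃! t, 0 < t ∧ f t = c := by
  obtain ⟨b, hbc, hb⟩ := ((hL.eventually_lt_const hLc).and (eventually_gt_atTop 0)).exists
  obtain ⟨t, ht, hft⟩ := intermediate_value_Ioo' hb.le hfc.continuousOn ⟨hbc, hc⟩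
  exact ⟨t, ⟨ht.1, hft⟩, fun s hs => hf.injective (hs.2.trans hft.symm)⟩

theorem stmt_12_general (N : ℕ) (u : Fin N → ℝ)
    (hpos : ∀ i, 0 < u i) (hsum : ∑ i, u i = 1)
    (m : Fin N) (hmin : ∀ i, i ≠ m → u m < u i)
    (α : ℝ) (hα₁ : 1 - ∑ i, (u i) ^ 2 < α) (hα₂ : α < 1 - u m) :
    ∃! ϖ : ℝ, 0 < ϖ ∧
      (∑ i, (u i) ^ 2 * Real.exp (ϖ * (1 - u i))) /
        (∑ i, u i * Real.exp (ϖ * (1 - u i))) = 1 - α := by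
  have : Nonempty (Fin N) := ⟨m⟩
  have hg : ∀ ϖ, (∑ i, (u i) ^ 2 * exp (ϖ * (1 - u i))) / (∑ i, u i * exp (ϖ * (1 - u i))) =
      gibbsMean u u ϖ := fun ϖ => by
    have h : ∀ i, exp (ϖ * (1 - u i)) = exp ϖ * exp (-(ϖ * u i)) := fun i => by
      rw [← exp_add]; ring_nf
    simp only [gibbsMean, h, mul_left_comm _ (exp ϖ), ← mul_sum, sq]
    exact mul_div_mul_left _ _ (exp_ne_zero _)
  have hg0 : gibbsMean u u 0 = ∑ i, u i ^ 2 := by simp [gibbsMean_zero, hsum, sq]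
  have hu : ∃ i j, u i ≠ u j := by
    by_contra! hconst
    have : ∑ i, u i ^ 2 = u m := calc
      ∑ i, u i ^ 2 = ∑ i, u m * u i := sum_congr rfl fun i _ => by rw [sq, hconst i m]
      _ = u m := by rw [← mul_sum, hsum, mul_one]
    linarith
  simp only [hg]
  exact (strictAnti_gibbsMean hpos hu).existsUnique_pos_eq (continuous_gibbsMean hpos)
    (tendsto_gibbsMean_atTop hpos fun i => (eq_or_ne i m).elim (fun h => h ▸ le_rfl)
      fun h => (hmin i h).le) (by linarith) (by linarith)

theorem stmt_12 (N : ℕ) (hN : 2 ≤ N) (u : Fin N → ℝ)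
    (hpos : ∀ i, 0 < u i) (hsum : ∑ i, u i = 1)
    (m : Fin N) (hmin : ∀ i, i ≠ m → u m < u i)
    (α : ℝ) (hα₁ : 1 - ∑ i, (u i) ^ 2 < α) (hα₂ : α < 1 - u m) :
    ∃! ϖ : ℝ, 0 < ϖ ∧
      (∑ i, (u i) ^ 2 * Real.exp (ϖ * (1 - u i))) /
        (∑ i, u i * Real.exp (ϖ * (1 - u i))) = 1 - α :=
  stmt_12_general N u hpos hsum m hmin α hα₁ hα₂
end

section
/- Let u : Fin N → ℝ be a probability mass function with positive entries, let ϖ ≥ 0, and let p* x = u x * exp(ϖ*(1 - u x)) / (∑ i, u i * exp(ϖ*(1 - u i))). Then for any probability mass function p : Fin N → ℝ with nonnegative entries satisfying ∑ i, p i * (1 - u i) ≥ ∑ i, p* i * (1 - u i), we have D(p‖u) ≥ D(p*‖u), where D(p‖u) = ∑ i, p i * log(p i / u i) (with 0 log 0 = 0). -/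
theorem stmt_15 (N : ℕ) (u : Fin N → ℝ)
    (hpos : ∀ i, 0 < u i) (hsum : ∑ i, u i = 1)
    (ϖ : ℝ) (hϖ : 0 ≤ ϖ)
    (p : Fin N → ℝ) (hp : ∀ i, 0 ≤ p i) (hpsum : ∑ i, p i = 1)
    (hfeas : ∑ i, (u i * Real.exp (ϖ * (1 - u i)) /
        (∑ j, u j * Real.exp (ϖ * (1 - u j)))) * (1 - u i)
      ≤ ∑ i, p i * (1 - u i)) :
    ∑ i, (u i * Real.exp (ϖ * (1 - u i)) /
        (∑ j, u j * Real.exp (ϖ * (1 - u j)))) *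
      Real.log ((u i * Real.exp (ϖ * (1 - u i)) /
        (∑ j, u j * Real.exp (ϖ * (1 - u j)))) / u i)
    ≤ ∑ i, p i * Real.log (p i / u i) := by
  set Z := ∑ j, u j * Real.exp (ϖ * (1 - u j)) with hZ
  have hNe : (Finset.univ : Finset (Fin N)).Nonempty := by
    by_contra h
    rw [Finset.not_nonempty_iff_eq_empty] at h
    rw [h, Finset.sum_empty] at hpsum
    norm_num at hpsum
  have hZpos : 0 < Z := Finset.sum_pos
    (fun j _ => mul_pos (hpos j) (Real.exp_pos _)) hNe
  set q : Fin N → ℝ := fun i => u i * Real.exp (ϖ * (1 - u i)) / Z with hq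
  have hqpos : ∀ i, 0 < q i :=
    fun i => div_pos (mul_pos (hpos i) (Real.exp_pos _)) hZpos
  have hqsum : ∑ i, q i = 1 := by
    rw [hq]
    simp only
    rw [← Finset.sum_div, ← hZ, div_self (ne_of_gt hZpos)]
  have hlogq : ∀ i, Real.log (q i / u i) = ϖ * (1 - u i) - Real.log Z := by
    intro i
    have hu := hpos i
    have : q i / u i = Real.exp (ϖ * (1 - u i)) / Z := by
      rw [hq]; field_simp
    rw [this, Real.log_div (Real.exp_ne_zero _) (ne_of_gt hZpos), Real.log_exp]
  have gibbs : ∑ i, p i * Real.log (q i / p i) ≤ 0 := by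
    calc ∑ i, p i * Real.log (q i / p i) ≤ ∑ i, (q i - p i) := by
          apply Finset.sum_le_sum
          intro i _
          rcases eq_or_lt_of_le (hp i) with h0 | h0
          · simp [← h0]; exact le_of_lt (hqpos i)
          · have hl := Real.log_le_sub_one_of_pos (div_pos (hqpos i) h0)
            calc p i * Real.log (q i / p i) ≤ p i * (q i / p i - 1) :=
                  mul_le_mul_of_nonneg_left hl (le_of_lt h0)
              _ = q i - p i := by field_simp
      _ = 0 := by rw [Finset.sum_sub_distrib, hqsum, hpsum, sub_self]
  have hsplit : ∀ i, p i * Real.log (p i / u i)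
      = p i * Real.log (p i / q i) + p i * Real.log (q i / u i) := by
    intro i
    rcases eq_or_lt_of_le (hp i) with h0 | h0
    · simp [← h0]
    · have hu := hpos i
      have hqi := hqpos i
      rw [← mul_add, ← Real.log_mul (by positivity) (by positivity)]
      congr 2
      field_simp
    
  have hflip : ∑ i, p i * Real.log (p i / q i) ≥ 0 := by
    have : ∑ i, p i * Real.log (p i / q i) = -∑ i, p i * Real.log (q i / p i) := by
      rw [← Finset.sum_neg_distrib]
      apply Finset.sum_congr rfl
      intro i _
      rcases eq_or_lt_of_le (hp i) with h0 | h0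
      · simp [← h0]
      · rw [Real.log_div (ne_of_gt h0) (ne_of_gt (hqpos i)), Real.log_div (ne_of_gt (hqpos i)) (ne_of_gt h0)]; ring
    rw [this]
    linarith
  have expand : ∀ w : Fin N → ℝ, (∑ i, w i = 1) →
      ∑ i, w i * Real.log (q i / u i) = ϖ * (∑ i, w i * (1 - u i)) - Real.log Z := by
    intro w hw
    simp_rw [hlogq, mul_sub]
    rw [Finset.sum_sub_distrib, ← Finset.sum_mul, hw, one_mul, Finset.mul_sum]
    congr 1
    apply Finset.sum_congr rfl
    intro i _
    ring
  have key : ∑ i, q i * Real.log (q i / u i) ≤ ∑ i, p i * Real.log (q i / u i) := by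
    rw [expand q hqsum, expand p hpsum]
    have := mul_le_mul_of_nonneg_left hfeas hϖ
    linarith
  calc ∑ i, q i * Real.log (q i / u i)
      ≤ ∑ i, p i * Real.log (q i / u i) := key
    _ ≤ ∑ i, p i * Real.log (p i / u i) := by
        rw [Finset.sum_congr rfl (fun i _ => hsplit i), Finset.sum_add_distrib]
        linarith
end

section
/- Let u : Fin N → ℝ be a probability mass function with positive entries, let ϖ ≤ 0, and let p* x = u x * exp(ϖ*(1 - u x)) / (∑ i, u i * exp(ϖ*(1 - u i))). Then for any probability mass function p : Fin N → ℝ with nonnegative entries satisfying ∑ i, p i * (1 - u i) ≤ ∑ i, p* i * (1 - u i), we have D(p‖u) ≥ D(p*‖u). -/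
theorem stmt_16 (N : ℕ) (u : Fin N → ℝ)
    (hpos : ∀ i, 0 < u i) (hsum : ∑ i, u i = 1)
    (ϖ : ℝ) (hϖ : ϖ ≤ 0)
    (p : Fin N → ℝ) (hp : ∀ i, 0 ≤ p i) (hpsum : ∑ i, p i = 1)
    (hfeas : ∑ i, p i * (1 - u i)
      ≤ ∑ i, (u i * Real.exp (ϖ * (1 - u i)) /
        (∑ j, u j * Real.exp (ϖ * (1 - u j)))) * (1 - u i)) :
    ∑ i, (u i * Real.exp (ϖ * (1 - u i)) /
        (∑ j, u j * Real.exp (ϖ * (1 - u j)))) *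
      Real.log ((u i * Real.exp (ϖ * (1 - u i)) /
        (∑ j, u j * Real.exp (ϖ * (1 - u j)))) / u i)
    ≤ ∑ i, p i * Real.log (p i / u i) := by
  have hNE : Nonempty (Fin N) := by
    by_contra h
    simp [Finset.univ_eq_empty_iff.2 (not_nonempty_iff.mp h)] at hsum
  set Z : ℝ := ∑ j, u j * Real.exp (ϖ * (1 - u j)) with hZdef
  have hZpos : 0 < Z := Finset.sum_pos
    (fun i _ => mul_pos (hpos i) (Real.exp_pos _)) Finset.univ_nonempty
  set q : Fin N → ℝ := fun i => u i * Real.exp (ϖ * (1 - u i)) / Z with hqdef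
  have hqpos : ∀ i, 0 < q i := fun i =>
    div_pos (mul_pos (hpos i) (Real.exp_pos _)) hZpos
  have hqsum : ∑ i, q i = 1 := by
    rw [hqdef]
    simp only
    rw [← Finset.sum_div, ← hZdef, div_self hZpos.ne']
  have hlogq : ∀ i, Real.log (q i / u i) = ϖ * (1 - u i) - Real.log Z := by
    intro i
    rw [hqdef]
    simp only
    have he : u i * Real.exp (ϖ * (1 - u i)) / Z / u i = Real.exp (ϖ * (1 - u i)) / Z := by
      rw [div_right_comm, mul_comm (u i), mul_div_assoc, div_self (hpos i).ne', mul_one]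
    rw [he, Real.log_div (Real.exp_pos _).ne' hZpos.ne', Real.log_exp]
  have hL : ∑ i, q i * Real.log (q i / u i)
      = ϖ * (∑ i, q i * (1 - u i)) - Real.log Z := by
    calc ∑ i, q i * Real.log (q i / u i)
        = ∑ i, (ϖ * (q i * (1 - u i)) - q i * Real.log Z) := by
          refine Finset.sum_congr rfl fun i _ => ?_
          rw [hlogq i]; ring
      _ = ϖ * (∑ i, q i * (1 - u i)) - Real.log Z := by
          rw [Finset.sum_sub_distrib, ← Finset.mul_sum, ← Finset.sum_mul, hqsum, one_mul]
  have key : ∀ i, p i * (ϖ * (1 - u i) - Real.log Z) + (p i - q i)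
      ≤ p i * Real.log (p i / u i) := by
    intro i
    rcases eq_or_lt_of_le (hp i) with h0 | h0
    · rw [← h0]; simp [(hqpos i).le]
    · have hlog : Real.log (p i / u i)
          = Real.log (p i / q i) + (ϖ * (1 - u i) - Real.log Z) := by
        rw [← hlogq i, Real.log_div h0.ne' (hpos i).ne',
          Real.log_div h0.ne' (hqpos i).ne', Real.log_div (hqpos i).ne' (hpos i).ne']
        ring
      rw [hlog, mul_add]
      have hg : Real.log (q i / p i) ≤ q i / p i - 1 :=
        Real.log_le_sub_one_of_pos (div_pos (hqpos i) h0)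
      have : p i - q i ≤ p i * Real.log (p i / q i) := by
        have := mul_le_mul_of_nonneg_left hg (hp i)
        rw [mul_sub, mul_one, mul_div_cancel₀ _ h0.ne'] at this
        have hflip : Real.log (p i / q i) = - Real.log (q i / p i) := by
          rw [← Real.log_inv, inv_div]
        rw [hflip]
        nlinarith
      linarith
  have hsumkey : ∑ i, (p i * (ϖ * (1 - u i) - Real.log Z) + (p i - q i))
      ≤ ∑ i, p i * Real.log (p i / u i) :=
    Finset.sum_le_sum fun i _ => key i
  have hLsum : ∑ i, (p i * (ϖ * (1 - u i) - Real.log Z) + (p i - q i))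
      = ϖ * (∑ i, p i * (1 - u i)) - Real.log Z := by
    rw [Finset.sum_add_distrib, Finset.sum_sub_distrib, hpsum, hqsum, sub_self, add_zero]
    calc ∑ i, p i * (ϖ * (1 - u i) - Real.log Z)
        = ∑ i, (ϖ * (p i * (1 - u i)) - p i * Real.log Z) := by
          refine Finset.sum_congr rfl fun i _ => ?_; ring
      _ = _ := by
          rw [Finset.sum_sub_distrib, ← Finset.mul_sum, ← Finset.sum_mul, hpsum, one_mul]
  have hmono : ϖ * (∑ i, q i * (1 - u i)) ≤ ϖ * (∑ i, p i * (1 - u i)) :=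
    mul_le_mul_of_nonpos_left hfeas hϖ
  calc ∑ i, q i * Real.log (q i / u i)
      = ϖ * (∑ i, q i * (1 - u i)) - Real.log Z := hL
    _ ≤ ϖ * (∑ i, p i * (1 - u i)) - Real.log Z := by linarith
    _ = ∑ i, (p i * (ϖ * (1 - u i) - Real.log Z) + (p i - q i)) := hLsum.symm
    _ ≤ ∑ i, p i * Real.log (p i / u i) := hsumkey
end

section
/- Let u : Fin N → ℝ be a probability mass function with positive entries, not all equal. Define f(ϖ, x) = u x * exp(ϖ*(1 - u x)) / (∑ i, u i * exp(ϖ*(1 - u i))). If x, y are indices with u x < u y and ϖ̃ > 0 is a real number with f(ϖ̃, y) = u y, then f(ϖ̃, x) > u x. -/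
/-! Writing `Z = ∑ i, u i * exp (ϖ * (1 - u i))`, the fixed-point condition at `y` says exactly
`exp (ϖ * (1 - u y)) = Z`. Since `ϖ > 0`, the weight `exp (ϖ * (1 - u i))` is strictly decreasing
in `u i`, so the weight at `x` exceeds `Z`, i.e. the tilted mass at `x` exceeds `u x`. -/

theorem eq_of_mul_div_eq_self {K : Type*} [Field K] {a b c : K} (ha : a ≠ 0)
    (h : a * b / c = a) : b = c := by
  have hc : c ≠ 0 := by
    rintro rfl
    rw [div_zero] at h
    exact ha h.symm
  rw [div_eq_iff hc] at h
  exact mul_left_cancel₀ ha h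

theorem lt_mul_div_of_lt {K : Type*} [Field K] [LinearOrder K] [IsStrictOrderedRing K]
    {a b c : K} (ha : 0 < a) (hc : 0 < c) (h : c < b) : a < a * b / c := by
  rw [mul_div_assoc]
  exact lt_mul_of_one_lt_right ha ((one_lt_div hc).2 h)

theorem stmt_17_general (N : ℕ) (u : Fin N → ℝ)
    (hpos : ∀ i, 0 < u i)
    (x y : Fin N) (hxy : u x < u y)
    (ϖ : ℝ) (hϖ : 0 < ϖ)
    (hfix : u y * Real.exp (ϖ * (1 - u y)) /
      (∑ i, u i * Real.exp (ϖ * (1 - u i))) = u y) :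
    u x < u x * Real.exp (ϖ * (1 - u x)) /
      (∑ i, u i * Real.exp (ϖ * (1 - u i))) := by
  have hZ : Real.exp (ϖ * (1 - u y)) = ∑ i, u i * Real.exp (ϖ * (1 - u i)) :=
    eq_of_mul_div_eq_self (hpos y).ne' hfix
  have hweight : Real.exp (ϖ * (1 - u y)) < Real.exp (ϖ * (1 - u x)) :=
    Real.exp_lt_exp.2 (mul_lt_mul_of_pos_left (sub_lt_sub_left hxy 1) hϖ)
  rw [← hZ]
  exact lt_mul_div_of_lt (hpos x) (Real.exp_pos _) hweight

theorem stmt_17 (N : ℕ) (hN : 2 ≤ N) (u : Fin N → ℝ)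
    (hpos : ∀ i, 0 < u i) (hsum : ∑ i, u i = 1)
    (x y : Fin N) (hxy : u x < u y)
    (ϖ : ℝ) (hϖ : 0 < ϖ)
    (hfix : u y * Real.exp (ϖ * (1 - u y)) /
      (∑ i, u i * Real.exp (ϖ * (1 - u i))) = u y) :
    u x < u x * Real.exp (ϖ * (1 - u x)) /
      (∑ i, u i * Real.exp (ϖ * (1 - u i))) :=
  stmt_17_general N u hpos x y hxy ϖ hϖ hfix
end

section
/- Let u : Fin N → ℝ be a probability mass function with positive entries. Then the map ϖ ↦ 0 is the unique real solution of the system f(ϖ, x) = u x for all x, where f(ϖ, x) = u x * exp(ϖ*(1 - u x)) / (∑ i, u i * exp(ϖ*(1 - u i))), provided u is not the uniform distributon (not all u i equal). That is, if f(ϖ, x) = u x for every x ∈ Fin N, then ϖ = 0. -/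
theorem eq_zero_of_exp_mul_one_sub_eq {ϖ a b : ℝ} (hab : a ≠ b)
    (h : Real.exp (ϖ * (1 - a)) = Real.exp (ϖ * (1 - b))) : ϖ = 0 := by
  have hprod : ϖ * (b - a) = 0 := by linarith [Real.exp_injective h]
  exact (mul_eq_zero.1 hprod).resolve_right (sub_ne_zero.2 hab.symm)

theorem stmt_18_general (N : ℕ) (u : Fin N → ℝ)
    (hpos : ∀ i, 0 < u i)
    (hne : ∃ i j, u i ≠ u j)
    (ϖ : ℝ)
    (hfix : ∀ x, u x * Real.exp (ϖ * (1 - u x)) /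
      (∑ i, u i * Real.exp (ϖ * (1 - u i))) = u x) :
    ϖ = 0 := by
  obtain ⟨i, j, hij⟩ := hne
  have hexp : ∀ x, Real.exp (ϖ * (1 - u x)) = ∑ i, u i * Real.exp (ϖ * (1 - u i)) :=
    fun x => eq_of_mul_div_eq_self (hpos x).ne' (hfix x)
  exact eq_zero_of_exp_mul_one_sub_eq hij ((hexp i).trans (hexp j).symm)

theorem stmt_18 (N : ℕ) (hN : 2 ≤ N) (u : Fin N → ℝ)
    (hpos : ∀ i, 0 < u i) (hsum : ∑ i, u i = 1)
    (hne : ∃ i j, u i ≠ u j)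
    (ϖ : ℝ)
    (hfix : ∀ x, u x * Real.exp (ϖ * (1 - u x)) /
      (∑ i, u i * Real.exp (ϖ * (1 - u i))) = u x) :
    ϖ = 0 :=
  stmt_18_general N u hpos hne ϖ hfix
end
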